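/- Let n ≥ 2, let Ω ⊂ ℝⁿ be a bounded open set, x₀ ∈ Ω and τ > 0 with the open ball B(x₀, τ) contained in Ω, and let ϱ > 0. Define w_τ^ϱ(x, y) := e^{−y/2}·ω_τ^ϱ(x) for (x, y) ∈ Ω × (0, +∞), and set h := 2·ω_n·τ^{n−2}·(1 − 2^{−n}) + |Ω|/8, where |Ω| is the Lebesgue measure of Ω. Let β : Ω → ℝ be a measurable essentially bounded function with β(x) ≥ β₀ for almost every x ∈ Ω, where β₀ > 0, and let F : ℝ → ℝ be continuous with F(t) ≥ 0 for every t ≥ 0. Then ∫_Ω β(x)·F(ω_τ^ϱ(x)) dx ≥ [β₀·ω_n·τⁿ·F(ϱ) / (2ⁿ·h·ϱ²)] · (1/2)∫_{Ω×(0,+∞)} |∇w_τ^ϱ(x, y)|² dx dy. -/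

import Mathlib

open Filter Topology MeasureTheory

/-- The truncated cone `ω_τ^ϱ` centered at `x₀`. -/
noncomputable def truncatedCone {n : ℕ} (x₀ : EuclideanSpace ℝ (Fin n)) (τ ϱ : ℝ) :
    EuclideanSpace ℝ (Fin n) → ℝ := fun x =>
  if dist x x₀ ≤ τ / 2 then ϱ
  else if dist x x₀ < τ then (2 * ϱ / τ) * (τ - dist x x₀)
  else 0

/-- `ω_n = π^{n/2}/Γ(1 + n/2)`, the Lebesgue measure of the unit ball of `ℝⁿ`. -/
noncomputable def unitBallVolume (n : ℕ) : ℝ :=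
  Real.pi ^ ((n : ℝ) / 2) / Real.Gamma (1 + (n : ℝ) / 2)

/-- Projection of a point of `ℝ^{n+1}` onto its first `n` coordinates. -/
noncomputable def projFirst {n : ℕ} (p : EuclideanSpace ℝ (Fin (n + 1))) :
    EuclideanSpace ℝ (Fin n) := WithLp.toLp 2 (fun i : Fin n => p i.castSucc)

/-- The last coordinate of a point of `ℝ^{n+1}`. -/
noncomputable def lastCoord {n : ℕ} (p : EuclideanSpace ℝ (Fin (n + 1))) : ℝ :=
  p (Fin.last n)

/-- The function `w_τ^ϱ(x, y) = e^{−y/2}·ω_τ^ϱ(x)` on `ℝⁿ × (0, ∞) ⊆ ℝ^{n+1}`. -/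
noncomputable def cylinderFun {n : ℕ} (x₀ : EuclideanSpace ℝ (Fin n)) (τ ϱ : ℝ) :
    EuclideanSpace ℝ (Fin (n + 1)) → ℝ := fun p =>
  Real.exp (-(lastCoord p) / 2) * truncatedCone x₀ τ ϱ (projFirst p)
/-!
The gradient of `w(x, y) = e^{-y/2} ω(x)` splits orthogonally into `e^{-y/2} ∇ω` and
`-e^{-y/2} ω / 2`, so `|∇w|² ≤ e^{-y} (|∇ω|² + ω²/4)`; the cone `ω` is `2ϱ/τ`-Lipschitz and locally
constant off the closed annulus `τ/2 ≤ |x - x₀| ≤ τ`. Integrating out `e^{-y}`, the Dirichlet energy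
over `Ω × (0, ∞)` is at most `(2ϱ/τ)² |annulus| + ϱ² |Ω| / 4 = 2 h ϱ²`. On the other hand
`β F(ω) ≥ 0` on `Ω` and `β F(ω) ≥ β₀ F(ϱ)` on the ball `B(x₀, τ/2) ⊆ Ω`, where `ω = ϱ`, so the
potential is at least `β₀ F(ϱ) ω_n τⁿ / 2ⁿ`.
-/

open scoped ENNReal

open RealInnerProductSpace in
theorem OrthonormalBasis.sum_sq_apply_eq_norm_sq {ι E : Type*} [Fintype ι] [NormedAddCommGroup E]
    [InnerProductSpace ℝ E] (b : OrthonormalBasis ι ℝ E) (φ : E →L[ℝ] ℝ) :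
    ∑ i, φ (b i) ^ 2 = ‖φ‖ ^ 2 := by
  have : FiniteDimensional ℝ E := b.toBasis.finiteDimensional_of_finite
  obtain ⟨u, rfl⟩ := (InnerProductSpace.toDual ℝ E).surjective φ
  simp only [InnerProductSpace.toDual_apply_apply, LinearIsometryEquiv.norm_map]
  exact b.sum_sq_inner_left u

section

variable {n : ℕ}

noncomputable def projFirstCLM (n : ℕ) :
    EuclideanSpace ℝ (Fin (n + 1)) →L[ℝ] EuclideanSpace ℝ (Fin n) :=
  LinearMap.toContinuousLinearMap
    { toFun := projFirst, map_add' := fun _ _ => rfl, map_smul' := fun _ _ => rfl }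

@[simp] theorem coe_projFirstCLM : ⇑(projFirstCLM n) = projFirst := rfl

noncomputable def insertLast (y : ℝ) (x : EuclideanSpace ℝ (Fin n)) :
    EuclideanSpace ℝ (Fin (n + 1)) :=
  WithLp.toLp 2 (Fin.snoc (α := fun _ => ℝ) x.ofLp y)

@[simp] theorem projFirst_insertLast (y : ℝ) (x : EuclideanSpace ℝ (Fin n)) :
    projFirst (insertLast y x) = x := by
  ext i; simp [projFirst, insertLast]

@[simp] theorem lastCoord_insertLast (y : ℝ) (x : EuclideanSpace ℝ (Fin n)) :
    lastCoord (insertLast y x) = y := by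
  simp [lastCoord, insertLast]

@[simp] theorem insertLast_lastCoord_projFirst (p : EuclideanSpace ℝ (Fin (n + 1))) :
    insertLast (lastCoord p) (projFirst p) = p := by
  ext i
  induction i using Fin.lastCases <;> simp [projFirst, lastCoord, insertLast]

theorem differentiable_insertLast (y : ℝ) :
    Differentiable ℝ (insertLast (n := n) y) := by
  rw [differentiable_piLp]
  intro i
  induction i using Fin.lastCases with
  | last => simp [insertLast]
  | cast j =>
    simpa [insertLast] using
      (EuclideanSpace.proj j : EuclideanSpace ℝ (Fin n) →L[ℝ] ℝ).differentiable

@[simp] theorem projFirst_single_last :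
    projFirst (EuclideanSpace.single (Fin.last n) (1 : ℝ)) = 0 := by
  ext i; simp [projFirst]

@[simp] theorem projFirst_single_castSucc (j : Fin n) :
    projFirst (EuclideanSpace.single j.castSucc (1 : ℝ)) = EuclideanSpace.single j 1 := by
  ext i; simp [projFirst]

theorem differentiableAt_of_differentiableAt_mul_comp {f : EuclideanSpace ℝ (Fin n) → ℝ}
    {g : ℝ → ℝ} {p : EuclideanSpace ℝ (Fin (n + 1))} (hg : g (lastCoord p) ≠ 0)
    (h : DifferentiableAt ℝ (fun q => g (lastCoord q) * f (projFirst q)) p) :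
    DifferentiableAt ℝ f (projFirst p) := by
  have hf : f = fun x => (g (lastCoord p))⁻¹ *
      (fun q => g (lastCoord q) * f (projFirst q)) (insertLast (lastCoord p) x) := by
    funext x
    simp [hg]
  have hw : DifferentiableAt ℝ (fun q => g (lastCoord q) * f (projFirst q))
      (insertLast (lastCoord p) (projFirst p)) := by simpa using h
  rw [hf]
  exact (hw.comp _ (differentiable_insertLast _ _)).const_mul _

theorem hasFDerivAt_mul_comp {f : EuclideanSpace ℝ (Fin n) → ℝ} {g : ℝ → ℝ}
    {p : EuclideanSpace ℝ (Fin (n + 1))} (hf : DifferentiableAt ℝ f (projFirst p))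
    (hg : DifferentiableAt ℝ g (lastCoord p)) :
    HasFDerivAt (fun q => g (lastCoord q) * f (projFirst q))
      (g (lastCoord p) • (fderiv ℝ f (projFirst p)).comp (projFirstCLM n) +
        f (projFirst p) • deriv g (lastCoord p) • EuclideanSpace.proj (Fin.last n)) p :=
  (hg.hasDerivAt.comp_hasFDerivAt p
    (EuclideanSpace.proj (Fin.last n) : EuclideanSpace ℝ (Fin (n + 1)) →L[ℝ] ℝ).hasFDerivAt).mul
    (hf.hasFDerivAt.comp p (projFirstCLM n).hasFDerivAt)

theorem norm_sq_fderiv_mul_comp {f : EuclideanSpace ℝ (Fin n) → ℝ} {g : ℝ → ℝ}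
    {p : EuclideanSpace ℝ (Fin (n + 1))} (hf : DifferentiableAt ℝ f (projFirst p))
    (hg : DifferentiableAt ℝ g (lastCoord p)) :
    ‖fderiv ℝ (fun q => g (lastCoord q) * f (projFirst q)) p‖ ^ 2 =
      (deriv g (lastCoord p) * f (projFirst p)) ^ 2 +
        g (lastCoord p) ^ 2 * ‖fderiv ℝ f (projFirst p)‖ ^ 2 := by
  rw [(hasFDerivAt_mul_comp hf hg).fderiv,
    ← (EuclideanSpace.basisFun _ ℝ).sum_sq_apply_eq_norm_sq,
    ← (EuclideanSpace.basisFun _ ℝ).sum_sq_apply_eq_norm_sq, Fin.sum_univ_castSucc, Finset.mul_sum]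
  simp [mul_pow]
  ring

theorem norm_sq_fderiv_mul_comp_le {f : EuclideanSpace ℝ (Fin n) → ℝ} {g : ℝ → ℝ}
    {p : EuclideanSpace ℝ (Fin (n + 1))} (hg : DifferentiableAt ℝ g (lastCoord p))
    (hg₀ : g (lastCoord p) ≠ 0) :
    ‖fderiv ℝ (fun q => g (lastCoord q) * f (projFirst q)) p‖ ^ 2 ≤
      (deriv g (lastCoord p) * f (projFirst p)) ^ 2 +
        g (lastCoord p) ^ 2 * ‖fderiv ℝ f (projFirst p)‖ ^ 2 := by
  by_cases hf : DifferentiableAt ℝ f (projFirst p)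
  · exact (norm_sq_fderiv_mul_comp hf hg).le
  · -- the product is not differentiable either, so its derivative is the junk value `0`
    rw [fderiv_zero_of_not_differentiableAt
      (mt (differentiableAt_of_differentiableAt_mul_comp hg₀) hf), norm_zero, zero_pow two_ne_zero]
    positivity

section TruncatedCone

variable (x₀ : EuclideanSpace ℝ (Fin n)) {τ ϱ : ℝ}

theorem truncatedCone_eq_min_max (hτ : 0 < τ) (hϱ : 0 ≤ ϱ) (x : EuclideanSpace ℝ (Fin n)) :
    truncatedCone x₀ τ ϱ x = min ϱ (max 0 (2 * ϱ / τ * (τ - dist x x₀))) := by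
  have hslope : 0 ≤ 2 * ϱ / τ := by positivity
  have hshift : 2 * ϱ / τ * (τ - dist x x₀) = ϱ + 2 * ϱ / τ * (τ / 2 - dist x x₀) := by
    field_simp; ring
  unfold truncatedCone
  split_ifs with hin hout
  · have : ϱ ≤ 2 * ϱ / τ * (τ - dist x x₀) := by
      rw [hshift]; nlinarith
    rw [max_eq_right (hϱ.trans this), min_eq_left this]
  · have h₀ : 0 ≤ 2 * ϱ / τ * (τ - dist x x₀) := mul_nonneg hslope (by linarith)
    have h₁ : 2 * ϱ / τ * (τ - dist x x₀) ≤ ϱ := by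
      rw [hshift]; nlinarith
    rw [max_eq_right h₀, min_eq_right h₁]
  · have : 2 * ϱ / τ * (τ - dist x x₀) ≤ 0 := mul_nonpos_of_nonneg_of_nonpos hslope (by linarith)
    rw [max_eq_left this, min_eq_right hϱ]

theorem truncatedCone_mem_Icc (hτ : 0 < τ) (hϱ : 0 ≤ ϱ) (x : EuclideanSpace ℝ (Fin n)) :
    truncatedCone x₀ τ ϱ x ∈ Set.Icc 0 ϱ := by
  rw [truncatedCone_eq_min_max x₀ hτ hϱ]
  exact ⟨le_min hϱ (le_max_left _ _), min_le_left _ _⟩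

theorem lipschitzWith_truncatedCone (hτ : 0 < τ) (hϱ : 0 ≤ ϱ) :
    LipschitzWith (Real.toNNReal (2 * ϱ / τ)) (truncatedCone x₀ τ ϱ) := by
  have hslope : 0 ≤ 2 * ϱ / τ := by positivity
  have hlin : LipschitzWith (Real.toNNReal (2 * ϱ / τ))
      fun x : EuclideanSpace ℝ (Fin n) => 2 * ϱ / τ * (τ - dist x x₀) := by
    refine LipschitzWith.of_dist_le_mul fun x y => ?_
    rw [Real.dist_eq, ← mul_sub, abs_mul, abs_of_nonneg hslope, Real.coe_toNNReal _ hslope]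
    gcongr
    rw [sub_sub_sub_cancel_left, abs_sub_comm]
    exact abs_dist_sub_le x y x₀
  rw [funext (truncatedCone_eq_min_max x₀ hτ hϱ)]
  exact (hlin.const_max 0).const_min ϱ

theorem fderiv_truncatedCone_eq_zero (hτ : 0 < τ) {x : EuclideanSpace ℝ (Fin n)}
    (hx : x ∉ Metric.closedBall x₀ τ \ Metric.ball x₀ (τ / 2)) :
    fderiv ℝ (truncatedCone x₀ τ ϱ) x = 0 := by
  rw [Set.mem_sdiff, not_and_or, not_not] at hx
  rcases hx with hout | hin
  · have : truncatedCone x₀ τ ϱ =ᶠ[𝓝 x] fun _ => 0 := by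
      filter_upwards [Metric.isClosed_closedBall.isOpen_compl.mem_nhds hout] with y hy
      have hy : τ < dist y x₀ := not_le.mp hy
      simp [truncatedCone, show ¬ dist y x₀ ≤ τ / 2 by linarith, hy.not_gt]
    rw [this.fderiv_eq, fderiv_const_apply]
  · have : truncatedCone x₀ τ ϱ =ᶠ[𝓝 x] fun _ => ϱ := by
      filter_upwards [Metric.isOpen_ball.mem_nhds hin] with y hy
      simp [truncatedCone, (Metric.mem_ball.mp hy).le]
    rw [this.fderiv_eq, fderiv_const_apply]

theorem norm_sq_fderiv_truncatedCone_le (hτ : 0 < τ) (hϱ : 0 ≤ ϱ)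
    (x : EuclideanSpace ℝ (Fin n)) :
    ‖fderiv ℝ (truncatedCone x₀ τ ϱ) x‖ ^ 2 ≤
      (Metric.closedBall x₀ τ \ Metric.ball x₀ (τ / 2)).indicator
        (fun _ => (2 * ϱ / τ) ^ 2) x := by
  by_cases hx : x ∈ Metric.closedBall x₀ τ \ Metric.ball x₀ (τ / 2)
  · rw [Set.indicator_of_mem hx]
    have := norm_fderiv_le_of_lipschitz ℝ (lipschitzWith_truncatedCone x₀ hτ hϱ) (x₀ := x)
    rw [Real.coe_toNNReal _ (by positivity)] at this
    gcongr
  · rw [fderiv_truncatedCone_eq_zero x₀ hτ hx, Set.indicator_of_notMem hx]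
    simp

end TruncatedCone

theorem hasDerivAt_exp_neg_half (y : ℝ) :
    HasDerivAt (fun t => Real.exp (-t / 2)) (-(Real.exp (-y / 2) / 2)) y := by
  have : HasDerivAt (fun t => -t / 2) (-1 / 2) y := (hasDerivAt_neg y).div_const 2
  convert this.exp using 1
  ring

theorem norm_sq_fderiv_cylinderFun_le (x₀ : EuclideanSpace ℝ (Fin n)) {τ ϱ : ℝ} (hτ : 0 < τ)
    (hϱ : 0 ≤ ϱ) (p : EuclideanSpace ℝ (Fin (n + 1))) :
    ‖fderiv ℝ (cylinderFun x₀ τ ϱ) p‖ ^ 2 ≤ Real.exp (-lastCoord p) *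
      ((Metric.closedBall x₀ τ \ Metric.ball x₀ (τ / 2)).indicator (fun _ => (2 * ϱ / τ) ^ 2)
        (projFirst p) + ϱ ^ 2 / 4) := by
  set y := lastCoord p
  set x := projFirst p
  have hexp : Real.exp (-y / 2) ^ 2 = Real.exp (-y) := by
    rw [← Real.exp_nat_mul]; ring_nf
  have hcone := truncatedCone_mem_Icc x₀ hτ hϱ x
  have hcone_sq : truncatedCone x₀ τ ϱ x ^ 2 ≤ ϱ ^ 2 := pow_le_pow_left₀ hcone.1 hcone.2 2
  calc ‖fderiv ℝ (cylinderFun x₀ τ ϱ) p‖ ^ 2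
      ≤ (-(Real.exp (-y / 2) / 2) * truncatedCone x₀ τ ϱ x) ^ 2 +
          Real.exp (-y / 2) ^ 2 * ‖fderiv ℝ (truncatedCone x₀ τ ϱ) x‖ ^ 2 := by
        rw [← (hasDerivAt_exp_neg_half y).deriv]
        exact norm_sq_fderiv_mul_comp_le (f := truncatedCone x₀ τ ϱ)
          (g := fun t => Real.exp (-t / 2)) (hasDerivAt_exp_neg_half y).differentiableAt
          (Real.exp_ne_zero _)
    _ = Real.exp (-y) * (‖fderiv ℝ (truncatedCone x₀ τ ϱ) x‖ ^ 2 +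
          truncatedCone x₀ τ ϱ x ^ 2 / 4) := by
        rw [← hexp]; ring
    _ ≤ _ := by
        gcongr
        exact norm_sq_fderiv_truncatedCone_le x₀ hτ hϱ x

noncomputable def splitLast (n : ℕ) :
    EuclideanSpace ℝ (Fin (n + 1)) ≃ᵐ ℝ × EuclideanSpace ℝ (Fin n) :=
  (MeasurableEquiv.toLp 2 (Fin (n + 1) → ℝ)).symm.trans
    ((MeasurableEquiv.piFinSuccAbove (fun _ => ℝ) (Fin.last n)).trans
      ((MeasurableEquiv.refl ℝ).prodCongr (MeasurableEquiv.toLp 2 (Fin n → ℝ))))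

theorem measurePreserving_splitLast (n : ℕ) : MeasurePreserving (splitLast n) :=
  (((MeasurePreserving.id volume).prod
    (EuclideanSpace.volume_preserving_symm_measurableEquiv_toLp (Fin n)).symm).comp
      (volume_preserving_piFinSuccAbove (fun _ => ℝ) (Fin.last n))).comp
    (EuclideanSpace.volume_preserving_symm_measurableEquiv_toLp (Fin (n + 1)))

@[simp] theorem splitLast_apply (p : EuclideanSpace ℝ (Fin (n + 1))) :
    splitLast n p = (lastCoord p, projFirst p) := by
  ext i
  · rfl
  · simp [splitLast, MeasurableEquiv.piFinSuccAbove, projFirst]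
    rfl

theorem preimage_splitLast_prod (s : Set ℝ) (t : Set (EuclideanSpace ℝ (Fin n))) :
    splitLast n ⁻¹' (s ×ˢ t) = {p | projFirst p ∈ t ∧ lastCoord p ∈ s} := by
  ext p; simp [and_comm]

theorem integrableOn_mul_comp {f : ℝ → ℝ} {g : EuclideanSpace ℝ (Fin n) → ℝ} {s : Set ℝ}
    {t : Set (EuclideanSpace ℝ (Fin n))} (hf : IntegrableOn f s) (hg : IntegrableOn g t) :
    IntegrableOn (fun p => f (lastCoord p) * g (projFirst p))
      {p | projFirst p ∈ t ∧ lastCoord p ∈ s} := by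
  have hcomp : (fun p => f (lastCoord p) * g (projFirst p)) =
      (fun z : ℝ × EuclideanSpace ℝ (Fin n) => f z.1 * g z.2) ∘ splitLast n := by
    funext p; simp
  rw [← preimage_splitLast_prod, hcomp, (measurePreserving_splitLast n).integrableOn_comp_preimage
    (splitLast n).measurableEmbedding, IntegrableOn, Measure.volume_eq_prod,
    ← Measure.prod_restrict]
  exact hf.mul_prod hg

theorem setIntegral_mul_comp (f : ℝ → ℝ) (g : EuclideanSpace ℝ (Fin n) → ℝ) (s : Set ℝ)
    (t : Set (EuclideanSpace ℝ (Fin n))) :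
    ∫ p in {p | projFirst p ∈ t ∧ lastCoord p ∈ s}, f (lastCoord p) * g (projFirst p) =
      (∫ y in s, f y) * ∫ x in t, g x := by
  rw [← preimage_splitLast_prod, ← setIntegral_prod_mul (μ := volume) (ν := volume),
    ← Measure.volume_eq_prod, ← (measurePreserving_splitLast n).setIntegral_preimage_emb
      (splitLast n).measurableEmbedding]
  simp

theorem unitBallVolume_pos (n : ℕ) : 0 < unitBallVolume n := by
  have : 0 < Real.Gamma (1 + (n : ℝ) / 2) := Real.Gamma_pos_of_pos (by positivity)
  unfold unitBallVolume
  positivity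

theorem measureReal_ball_eq (hn : n ≠ 0) (x : EuclideanSpace ℝ (Fin n)) {r : ℝ} (hr : 0 ≤ r) :
    volume.real (Metric.ball x r) = unitBallVolume n * r ^ n := by
  have : Nonempty (Fin n) := ⟨⟨0, Nat.pos_of_ne_zero hn⟩⟩
  have hsqrt : Real.sqrt Real.pi ^ n = Real.pi ^ ((n : ℝ) / 2) := by
    rw [Real.sqrt_eq_rpow, ← Real.rpow_natCast, ← Real.rpow_mul Real.pi_pos.le]
    ring_nf
  rw [measureReal_def, EuclideanSpace.volume_ball, Fintype.card_fin, ENNReal.toReal_mul,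
    ENNReal.toReal_pow, ENNReal.toReal_ofReal hr, ENNReal.toReal_ofReal (by positivity), hsqrt,
    unitBallVolume, add_comm, mul_comm]

theorem measureReal_closedBall_eq (hn : n ≠ 0) (x : EuclideanSpace ℝ (Fin n)) {r : ℝ}
    (hr : 0 ≤ r) : volume.real (Metric.closedBall x r) = unitBallVolume n * r ^ n := by
  have : Nonempty (Fin n) := ⟨⟨0, Nat.pos_of_ne_zero hn⟩⟩
  rw [measureReal_def, Measure.addHaar_closedBall_eq_addHaar_ball, ← measureReal_def,
    measureReal_ball_eq hn x hr]

theorem measureReal_closedBall_diff_ball_half (hn : n ≠ 0) (x : EuclideanSpace ℝ (Fin n))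
    {r : ℝ} (hr : 0 ≤ r) :
    volume.real (Metric.closedBall x r \ Metric.ball x (r / 2)) =
      unitBallVolume n * r ^ n * (1 - 1 / 2 ^ n) := by
  rw [measureReal_sdiff (Metric.ball_subset_closedBall.trans
      (Metric.closedBall_subset_closedBall (by linarith))) measurableSet_ball
      measure_closedBall_lt_top.ne,
    measureReal_closedBall_eq hn x hr, measureReal_ball_eq hn x (by linarith), div_pow]
  ring

theorem setIntegral_norm_sq_fderiv_cylinderFun_le (x₀ : EuclideanSpace ℝ (Fin n)) {τ ϱ : ℝ}
    (hτ : 0 < τ) (hϱ : 0 ≤ ϱ) {Ω : Set (EuclideanSpace ℝ (Fin n))} (hΩ : volume Ω ≠ ∞) :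
    ∫ p in {p | projFirst p ∈ Ω ∧ 0 < lastCoord p}, ‖fderiv ℝ (cylinderFun x₀ τ ϱ) p‖ ^ 2 ≤
      (2 * ϱ / τ) ^ 2 * volume.real (Metric.closedBall x₀ τ \ Metric.ball x₀ (τ / 2)) +
        volume.real Ω * (ϱ ^ 2 / 4) := by
  set A := Metric.closedBall x₀ τ \ Metric.ball x₀ (τ / 2)
  set g := fun x => A.indicator (fun _ => (2 * ϱ / τ) ^ 2) x + ϱ ^ 2 / 4
  have hA : MeasurableSet A := measurableSet_closedBall.diff measurableSet_ball
  have hAind : IntegrableOn (A.indicator fun _ => (2 * ϱ / τ) ^ 2) Ω :=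
    (integrableOn_const hΩ).indicator hA
  have hg : IntegrableOn g Ω := hAind.add (integrableOn_const hΩ)
  have hmajorant := integrableOn_mul_comp (integrableOn_exp_neg_Ioi 0) hg
  refine (integral_mono_of_nonneg (ae_of_all _ fun _ => by positivity) hmajorant
    (ae_of_all _ (norm_sq_fderiv_cylinderFun_le x₀ hτ hϱ))).trans ?_
  rw [setIntegral_mul_comp (fun y => Real.exp (-y)) g, integral_exp_neg_Ioi_zero, one_mul,
    integral_add hAind (integrableOn_const hΩ), setIntegral_indicator hA, setIntegral_const,
    setIntegral_const, smul_eq_mul, smul_eq_mul, mul_comm]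
  gcongr
  · exact measure_ne_top_of_subset Set.sdiff_subset measure_closedBall_lt_top.ne
  · exact Set.inter_subset_right

theorem setIntegral_norm_sq_fderiv_cylinderFun_le_of_two_le (hn : 2 ≤ n)
    (x₀ : EuclideanSpace ℝ (Fin n)) {τ ϱ : ℝ} (hτ : 0 < τ) (hϱ : 0 ≤ ϱ)
    {Ω : Set (EuclideanSpace ℝ (Fin n))} (hΩ : volume Ω ≠ ∞) :
    ∫ p in {p | projFirst p ∈ Ω ∧ 0 < lastCoord p}, ‖fderiv ℝ (cylinderFun x₀ τ ϱ) p‖ ^ 2 ≤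
      2 * (2 * unitBallVolume n * τ ^ (n - 2) * (1 - 1 / 2 ^ n) + (volume Ω).toReal / 8) *
        ϱ ^ 2 := by
  refine (setIntegral_norm_sq_fderiv_cylinderFun_le x₀ hτ hϱ hΩ).trans_eq ?_
  obtain ⟨m, rfl⟩ : ∃ m, n = m + 2 := ⟨n - 2, by omega⟩
  rw [measureReal_closedBall_diff_ball_half (by omega) x₀ hτ.le, measureReal_def,
    Nat.add_sub_cancel, pow_add]
  field_simp
  ring

theorem mul_measureReal_le_setIntegral_mul {α : Type*} [MeasurableSpace α] {μ : Measure α}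
    {Ω B : Set α} {β φ : α → ℝ} {β₀ c C : ℝ} (hB : MeasurableSet B) (hBΩ : B ⊆ Ω)
    (hβ : AEStronglyMeasurable β (μ.restrict Ω)) (hβbdd : ∀ᵐ x ∂μ.restrict Ω, |β x| ≤ C)
    (hβlb : ∀ᵐ x ∂μ.restrict Ω, β₀ ≤ β x) (hβ₀ : 0 ≤ β₀) (hφ : IntegrableOn φ Ω μ)
    (hφ₀ : ∀ᵐ x ∂μ.restrict Ω, 0 ≤ φ x) (hφB : ∀ x ∈ B, φ x = c) :
    β₀ * c * μ.real B ≤ ∫ x in Ω, β x * φ x ∂μ := by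
  have hβφ : IntegrableOn (fun x => β x * φ x) Ω μ := hφ.bdd_mul hβ hβbdd
  calc β₀ * c * μ.real B = ∫ x in B, β₀ * φ x ∂μ := by
        rw [setIntegral_congr_fun hB fun x hx => by rw [hφB x hx], setIntegral_const,
          smul_eq_mul]
        ring
    _ ≤ ∫ x in Ω, β₀ * φ x ∂μ := by
        refine setIntegral_mono_set (hφ.const_mul β₀) ?_ hBΩ.eventuallyLE
        filter_upwards [hφ₀] with x hx using mul_nonneg hβ₀ hx
    _ ≤ ∫ x in Ω, β x * φ x ∂μ := by
        refine integral_mono_ae (hφ.const_mul β₀) hβφ ?_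
        filter_upwards [hβlb, hφ₀] with x hβx hφx using mul_le_mul_of_nonneg_right hβx hφx

theorem integrableOn_comp_truncatedCone (x₀ : EuclideanSpace ℝ (Fin n)) {τ ϱ : ℝ} (hτ : 0 < τ)
    (hϱ : 0 ≤ ϱ) {F : ℝ → ℝ} (hF : Continuous F) {Ω : Set (EuclideanSpace ℝ (Fin n))}
    (hΩ : volume Ω ≠ ∞) : IntegrableOn (fun x => F (truncatedCone x₀ τ ϱ x)) Ω := by
  obtain ⟨M, hM⟩ :=
    (isCompact_Icc : IsCompact (Set.Icc 0 ϱ)).exists_bound_of_continuousOn hF.continuousOn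
  exact Measure.integrableOn_of_bounded hΩ
    (hF.comp (lipschitzWith_truncatedCone x₀ hτ hϱ).continuous).aestronglyMeasurable
    (ae_of_all _ fun x => hM _ (truncatedCone_mem_Icc x₀ hτ hϱ x))

end

theorem weighted_potential_vs_gradient_energy_general
    {n : ℕ} (hn : 2 ≤ n) (Ω : Set (EuclideanSpace ℝ (Fin n)))
    (hΩbdd : Bornology.IsBounded Ω)
    (x₀ : EuclideanSpace ℝ (Fin n))
    (τ : ℝ) (hτ : 0 < τ) (hball : Metric.ball x₀ τ ⊆ Ω)
    (ϱ : ℝ) (hϱ : 0 < ϱ)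
    (β : EuclideanSpace ℝ (Fin n) → ℝ) (hβmeas : Measurable β)
    (C : ℝ) (hβbdd : ∀ᵐ x ∂(volume.restrict Ω), |β x| ≤ C)
    (β₀ : ℝ) (hβ₀ : 0 < β₀) (hβlb : ∀ᵐ x ∂(volume.restrict Ω), β₀ ≤ β x)
    (F : ℝ → ℝ) (hFcont : Continuous F) (hFnonneg : ∀ t : ℝ, 0 ≤ t → 0 ≤ F t) :
    (β₀ * unitBallVolume n * τ ^ n * F ϱ /
        (2 ^ n * (2 * unitBallVolume n * τ ^ (n - 2) * (1 - 1 / 2 ^ n)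
          + (volume Ω).toReal / 8) * ϱ ^ 2)) *
      ((1 / 2) *
        ∫ p in {p : EuclideanSpace ℝ (Fin (n + 1)) | projFirst p ∈ Ω ∧ 0 < lastCoord p},
          ‖fderiv ℝ (cylinderFun x₀ τ ϱ) p‖ ^ 2 ∂volume)
      ≤ ∫ x in Ω, β x * F (truncatedCone x₀ τ ϱ x) ∂volume := by
  have hΩ : volume Ω ≠ ∞ := hΩbdd.measure_lt_top.ne
  have henergy := setIntegral_norm_sq_fderiv_cylinderFun_le_of_two_le hn x₀ hτ hϱ.le hΩ
  set V := unitBallVolume n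
  set h := 2 * V * τ ^ (n - 2) * (1 - 1 / 2 ^ n) + (volume Ω).toReal / 8
  have hV : 0 < V := unitBallVolume_pos n
  have hh : 0 < h := by
    have : (1 : ℝ) / 2 ^ n < 1 := by
      rw [div_lt_one (by positivity)]; exact one_lt_pow₀ one_lt_two (by omega)
    have : 0 ≤ (volume Ω).toReal := ENNReal.toReal_nonneg
    have : 0 < 1 - (1 : ℝ) / 2 ^ n := by linarith
    positivity
  have hpotential : β₀ * F ϱ * (V * (τ / 2) ^ n) ≤
      ∫ x in Ω, β x * F (truncatedCone x₀ τ ϱ x) := by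
    rw [← measureReal_ball_eq (by omega) x₀ (by linarith : 0 ≤ τ / 2)]
    refine mul_measureReal_le_setIntegral_mul measurableSet_ball
      ((Metric.ball_subset_ball (by linarith)).trans hball) hβmeas.aestronglyMeasurable hβbdd
      hβlb hβ₀.le (integrableOn_comp_truncatedCone x₀ hτ hϱ.le hFcont hΩ)
      (ae_of_all _ fun x => hFnonneg _ (truncatedCone_mem_Icc x₀ hτ hϱ.le x).1) fun x hx => ?_
    simp [truncatedCone, (Metric.mem_ball.mp hx).le]
  have hFϱ := hFnonneg ϱ hϱ.le
  calc _ ≤ β₀ * V * τ ^ n * F ϱ / (2 ^ n * h * ϱ ^ 2) * (h * ϱ ^ 2) :=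
        mul_le_mul_of_nonneg_left (by linarith) (by positivity)
    _ = β₀ * F ϱ * (V * (τ / 2) ^ n) := by rw [div_pow]; field_simp
    _ ≤ _ := hpotential

/-- With `h = 2ω_n τ^{n−2}(1 − 2^{−n}) + |Ω|/8`, for essentially bounded `β ≥ β₀ > 0`
a.e. on `Ω` and continuous `F ≥ 0` on `[0, ∞)`, one has
`∫_Ω β F(ω_τ^ϱ) ≥ [β₀ ω_n τⁿ F(ϱ)/(2ⁿ h ϱ²)] · (1/2)∫_{Ω×(0,∞)} |∇w_τ^ϱ|²`. -/
theorem weighted_potential_vs_gradient_energy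
    {n : ℕ} (hn : 2 ≤ n) (Ω : Set (EuclideanSpace ℝ (Fin n)))
    (hΩopen : IsOpen Ω) (hΩbdd : Bornology.IsBounded Ω)
    (x₀ : EuclideanSpace ℝ (Fin n)) (hx₀ : x₀ ∈ Ω)
    (τ : ℝ) (hτ : 0 < τ) (hball : Metric.ball x₀ τ ⊆ Ω)
    (ϱ : ℝ) (hϱ : 0 < ϱ)
    (β : EuclideanSpace ℝ (Fin n) → ℝ) (hβmeas : Measurable β)
    (C : ℝ) (hβbdd : ∀ᵐ x ∂(volume.restrict Ω), |β x| ≤ C)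
    (β₀ : ℝ) (hβ₀ : 0 < β₀) (hβlb : ∀ᵐ x ∂(volume.restrict Ω), β₀ ≤ β x)
    (F : ℝ → ℝ) (hFcont : Continuous F) (hFnonneg : ∀ t : ℝ, 0 ≤ t → 0 ≤ F t) :
    (β₀ * unitBallVolume n * τ ^ n * F ϱ /
        (2 ^ n * (2 * unitBallVolume n * τ ^ (n - 2) * (1 - 1 / 2 ^ n)
          + (volume Ω).toReal / 8) * ϱ ^ 2)) *
      ((1 / 2) *
        ∫ p in {p : EuclideanSpace ℝ (Fin (n + 1)) | projFirst p ∈ Ω ∧ 0 < lastCoord p},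
          ‖fderiv ℝ (cylinderFun x₀ τ ϱ) p‖ ^ 2 ∂volume)
      ≤ ∫ x in Ω, β x * F (truncatedCone x₀ τ ϱ x) ∂volume :=
  weighted_potential_vs_gradient_energy_general hn Ω hΩbdd x₀ τ hτ hball ϱ hϱ β hβmeas C hβbdd β₀
    hβ₀ hβlb F hFcont hFnonneg
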